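/- arXiv:math/0507129 — 5 statements merged into one kernel-verified Lean document; each statement's English description precedes it below -/
import Mathlib

section
/- Classification of energy-conserving nearest-neighbor quadratic models: suppose an infinite system u_j' = Σ coefficients·(quadratic monomials in u_{j-1}, u_j, u_{j+1}) has each term in the equation for u_j' of the form c·λ^j·(monomial) with constants c independent of j (allowing a λ^{j+1} factor where the monomial involves u_{j+1}), and that Σ_j u_j u_j' = 0 identically for all finitely supported real sequences (u_j). Then there exist α, β ∈ ℝ such that u_j' = α(λ^j u_{j-1}^2 - λ^{j+1} u_j u_{j+1}) + β(λ^j u_j u_{j-1} - λ^{j+1} u_{j+1}^2) for all j. -/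
/-- The value of the mode `u (j-1)`, with the convention `u_{-1} = 0`. -/
noncomputable def prevMode (u : ℕ → ℝ) (j : ℕ) : ℝ := if j = 0 then 0 else u (j - 1)

/-- The general nearest-neighbor quadratic right-hand side with j-independent
coefficients `a b c d e f` and scaling `λ^j` (or `λ^{j+1}` for terms involving
`u_{j+1}`). -/
noncomputable def rhsModel (lam a b c d e f : ℝ) (u : ℕ → ℝ) (j : ℕ) : ℝ :=
  lam ^ j * (a * (prevMode u j) ^ 2 + b * prevMode u j * u j + c * (u j) ^ 2)
    + lam ^ (j + 1) * (d * u j * u (j + 1) + e * (u (j + 1)) ^ 2)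
    + lam ^ (j + 1) * (f * prevMode u j * u (j + 1))

/-- Classification of energy-conserving nearest-neighbor quadratic models:
any such model is a linear combination of the KP and the Obukhov model. -/
theorem stmt_4 (lam : ℝ) (hlam : 1 < lam) (a b c d e f : ℝ)
    (hcons : ∀ u : ℕ → ℝ, (∃ N : ℕ, ∀ j > N, u j = 0) →
      (∑' j : ℕ, u j * rhsModel lam a b c d e f u j) = 0) :
    ∃ α β : ℝ, ∀ (u : ℕ → ℝ) (j : ℕ),
      rhsModel lam a b c d e f u j =
        α * (lam ^ j * (prevMode u j) ^ 2 - lam ^ (j + 1) * u j * u (j + 1))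
        + β * (lam ^ j * u j * prevMode u j - lam ^ (j + 1) * (u (j + 1)) ^ 2) := by
  have hlam0 : lam ≠ 0 := by nlinarith
  have key : ∀ x y z : ℝ,
      c * x ^ 3 + lam * (a + d) * x ^ 2 * y + lam * (b + e) * x * y ^ 2
        + lam * c * y ^ 3 + lam ^ 2 * (a + d) * y ^ 2 * z
        + lam ^ 2 * (b + e) * y * z ^ 2 + lam ^ 2 * c * z ^ 3
        + lam ^ 2 * f * x * y * z = 0 := by
    intro x y z
    set u : ℕ → ℝ := fun n => if n = 0 then x else if n = 1 then y else if n = 2 then z else 0 with hu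
    have hsupp : ∀ j > 2, u j = 0 := by
      intro j hj
      have h0 : j ≠ 0 := by omega
      have h1 : j ≠ 1 := by omega
      have h2 : j ≠ 2 := by omega
      simp [hu, h0, h1, h2]
    have h := hcons u ⟨2, hsupp⟩
    rw [tsum_eq_sum (s := Finset.range 3)
      (by intro b hb; rw [hsupp b (by simp at hb; omega)]; ring)] at h
    have hsum : ∑ j ∈ Finset.range 3, u j * rhsModel lam a b c d e f u j =
        c * x ^ 3 + lam * (a + d) * x ^ 2 * y + lam * (b + e) * x * y ^ 2
        + lam * c * y ^ 3 + lam ^ 2 * (a + d) * y ^ 2 * z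
        + lam ^ 2 * (b + e) * y * z ^ 2 + lam ^ 2 * c * z ^ 3
        + lam ^ 2 * f * x * y * z := by
      simp [Finset.sum_range_succ, rhsModel, prevMode, hu]
      ring
    rw [hsum] at h
    exact h
  have hc : c = 0 := by
    have h := key 1 0 0
    simpa using h
  have hAB : lam * (a + d) + lam * (b + e) = 0 := by
    have h := key 1 1 0
    rw [hc] at h; linarith [h]
  have hAB' : lam * (a + d) - lam * (b + e) = 0 := by
    have h := key 1 (-1) 0
    rw [hc] at h; nlinarith [h]
  have hA : a + d = 0 := by
    have : lam * (a + d) = 0 := by linarith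
    rcases mul_eq_zero.mp this with h | h
    · exact absurd h hlam0
    · exact h
  have hB : b + e = 0 := by
    have : lam * (b + e) = 0 := by linarith
    rcases mul_eq_zero.mp this with h | h
    · exact absurd h hlam0
    · exact h
  have hf : f = 0 := by
    have h := key 1 1 1
    rw [hc] at h
    have h2 : lam ^ 2 * f = 0 := by nlinarith [h]
    rcases mul_eq_zero.mp h2 with h' | h'
    · exact absurd h' (pow_ne_zero 2 hlam0)
    · exact h'
  refine ⟨a, b, fun u j => ?_⟩
  have hd : d = -a := by linarith
  have he : e = -b := by linarith
  rw [rhsModel, hc, hd, he, hf]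
  ring
end

section
/- In the KP model, the energy of a block of consecutive nonnegative modes is nondecreasing: suppose on an interval I the functions u_l, l = j_1-1, ..., j_2+1, satisfy the KP equations u_l' = λ^l u_{l-1}^2 - λ^{l+1} u_l u_{l+1} for j_1 ≤ l ≤ j_2, with u_l(t) ≥ 0 for j_1 ≤ l ≤ j_2 and u_{j_2+1}(t) ≤ 0 for t ∈ I. Then d/dt Σ_{l=j_1}^{j_2} u_l(t)^2 = 2(λ^{j_1} u_{j_1} u_{j_1-1}^2 - λ^{j_2+1} u_{j_2}^2 u_{j_2+1}) ≥ 0 on I, so Σ_{l=j_1}^{j_2} u_l(t)^2 is nondecreasing on I. -/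
/-- Telescoping sum over `Finset.Icc`. -/
lemma telescope_Icc (G : ℕ → ℝ) (a b : ℕ) (hab : a ≤ b) :
    ∑ l ∈ Finset.Icc a b, (G l - G (l + 1)) = G a - G (b + 1) := by
  induction b, hab using Nat.le_induction with
  | base => simp
  | succ n hn ih =>
      rw [Finset.sum_Icc_succ_top (le_trans hn (Nat.le_succ n)), ih]
      ring

/-- KP model: the energy of a block of consecutive nonnegative modes is
nondecreasing, with the telescoped derivative identity. -/
theorem stmt_5 (lam : ℝ) (hlam : 1 < lam) (j₁ j₂ : ℕ) (hj₁ : 1 ≤ j₁) (hj : j₁ ≤ j₂)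
    (t₀ T : ℝ) (ht : t₀ ≤ T) (u : ℕ → ℝ → ℝ)
    (hode : ∀ l : ℕ, j₁ ≤ l → l ≤ j₂ → ∀ t ∈ Set.Icc t₀ T,
      HasDerivWithinAt (u l)
        (lam ^ l * (u (l - 1) t) ^ 2 - lam ^ (l + 1) * u l t * u (l + 1) t)
        (Set.Icc t₀ T) t)
    (hpos : ∀ l : ℕ, j₁ ≤ l → l ≤ j₂ → ∀ t ∈ Set.Icc t₀ T, 0 ≤ u l t)
    (hneg : ∀ t ∈ Set.Icc t₀ T, u (j₂ + 1) t ≤ 0) :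
    (∀ t ∈ Set.Icc t₀ T,
      HasDerivWithinAt (fun s => ∑ l ∈ Finset.Icc j₁ j₂, (u l s) ^ 2)
        (2 * (lam ^ j₁ * u j₁ t * (u (j₁ - 1) t) ^ 2
          - lam ^ (j₂ + 1) * (u j₂ t) ^ 2 * u (j₂ + 1) t))
        (Set.Icc t₀ T) t ∧
      0 ≤ 2 * (lam ^ j₁ * u j₁ t * (u (j₁ - 1) t) ^ 2
          - lam ^ (j₂ + 1) * (u j₂ t) ^ 2 * u (j₂ + 1) t)) ∧
    MonotoneOn (fun s => ∑ l ∈ Finset.Icc j₁ j₂, (u l s) ^ 2) (Set.Icc t₀ T) := by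
  have hlam0 : (0:ℝ) < lam := lt_trans one_pos hlam
  have key : ∀ t ∈ Set.Icc t₀ T,
      HasDerivWithinAt (fun s => ∑ l ∈ Finset.Icc j₁ j₂, (u l s) ^ 2)
        (2 * (lam ^ j₁ * u j₁ t * (u (j₁ - 1) t) ^ 2
          - lam ^ (j₂ + 1) * (u j₂ t) ^ 2 * u (j₂ + 1) t))
        (Set.Icc t₀ T) t := by
    intro t htm
    have hsum : HasDerivWithinAt (fun s => ∑ l ∈ Finset.Icc j₁ j₂, (u l s) ^ 2)
        (∑ l ∈ Finset.Icc j₁ j₂,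
          (2 * lam ^ l * u l t * (u (l - 1) t) ^ 2
            - 2 * lam ^ (l + 1) * (u l t) ^ 2 * u (l + 1) t))
        (Set.Icc t₀ T) t := by
      apply HasDerivWithinAt.fun_sum
      intro l hl
      rw [Finset.mem_Icc] at hl
      have h := (hode l hl.1 hl.2 t htm)
      have hsq : HasDerivWithinAt (fun s => (u l s) ^ 2)
          (2 * u l t * (lam ^ l * (u (l - 1) t) ^ 2 - lam ^ (l + 1) * u l t * u (l + 1) t))
          (Set.Icc t₀ T) t := by
        have := h.fun_pow 2
        simpa [mul_comm, mul_assoc, mul_left_comm] using this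
      convert hsq using 1
      · rfl
      · rfl
      ring
    have heq : (∑ l ∈ Finset.Icc j₁ j₂,
          (2 * lam ^ l * u l t * (u (l - 1) t) ^ 2
            - 2 * lam ^ (l + 1) * (u l t) ^ 2 * u (l + 1) t))
        = 2 * (lam ^ j₁ * u j₁ t * (u (j₁ - 1) t) ^ 2
          - lam ^ (j₂ + 1) * (u j₂ t) ^ 2 * u (j₂ + 1) t) := by
      have := telescope_Icc (fun l => 2 * lam ^ l * u l t * (u (l - 1) t) ^ 2) j₁ j₂ hj
      rw [Finset.sum_congr rfl (fun l hl => ?_), this]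
      · simp only [Nat.add_sub_cancel]
        ring
      · simp only [Nat.add_sub_cancel]
        ring
    rw [← heq]
    exact hsum
  have nonneg : ∀ t ∈ Set.Icc t₀ T,
      0 ≤ 2 * (lam ^ j₁ * u j₁ t * (u (j₁ - 1) t) ^ 2
          - lam ^ (j₂ + 1) * (u j₂ t) ^ 2 * u (j₂ + 1) t) := by
    intro t htm
    have h1 : 0 ≤ lam ^ j₁ * u j₁ t * (u (j₁ - 1) t) ^ 2 :=
      mul_nonneg (mul_nonneg (pow_nonneg hlam0.le _) (hpos j₁ le_rfl hj t htm)) (sq_nonneg _)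
    have h2 : lam ^ (j₂ + 1) * (u j₂ t) ^ 2 * u (j₂ + 1) t ≤ 0 :=
      mul_nonpos_of_nonneg_of_nonpos
        (mul_nonneg (pow_nonneg hlam0.le _) (sq_nonneg _)) (hneg t htm)
    nlinarith
  refine ⟨fun t htm => ⟨key t htm, nonneg t htm⟩, ?_⟩
  apply monotoneOn_of_hasDerivWithinAt_nonneg (convex_Icc t₀ T)
    (f' := fun t => 2 * (lam ^ j₁ * u j₁ t * (u (j₁ - 1) t) ^ 2
          - lam ^ (j₂ + 1) * (u j₂ t) ^ 2 * u (j₂ + 1) t))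
  · exact fun t htm => (key t htm).continuousWithinAt
  · intro t htm
    exact (key t (interior_subset htm)).mono interior_subset
  · intro t htm
    exact nonneg t (interior_subset htm)
end

section
/- In the Obukhov model, the tail energy above a nonpositive mode is nonincreasing: if u is a solution of the (finitely supported) Obukhov system on [t_0, T] with u_{j-1}(t) ≤ 0 for all t ∈ [t_0, T], then E_j(t) = Σ_{l ≥ j} u_l(t)^2 satisfies E_j'(t) = 2λ^j u_{j-1}(t) u_j(t)^2 ≤ 0, so E_j is nonincreasing on [t_0, T]. -/
/-- Obukhov model: the tail energy above a nonpositive mode is nonincreasing. -/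
theorem stmt_6 (lam : ℝ) (hlam : 1 < lam) (j : ℕ) (hjson : 1 ≤ j)
    (t₀ T : ℝ) (ht : t₀ ≤ T) (u : ℕ → ℝ → ℝ)
    (h0 : ∀ t ∈ Set.Icc t₀ T, HasDerivWithinAt (u 0) (-lam * (u 1 t) ^ 2) (Set.Icc t₀ T) t)
    (hode : ∀ l : ℕ, 1 ≤ l → ∀ t ∈ Set.Icc t₀ T,
      HasDerivWithinAt (u l)
        (lam ^ l * u (l - 1) t * u l t - lam ^ (l + 1) * (u (l + 1) t) ^ 2)
        (Set.Icc t₀ T) t)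
    (N : ℕ) (hfin : ∀ l : ℕ, N < l → ∀ t : ℝ, u l t = 0)
    (hneg : ∀ t ∈ Set.Icc t₀ T, u (j - 1) t ≤ 0) :
    (∀ t ∈ Set.Icc t₀ T,
      HasDerivWithinAt (fun s => ∑' l : ℕ, (u (j + l) s) ^ 2)
        (2 * lam ^ j * u (j - 1) t * (u j t) ^ 2) (Set.Icc t₀ T) t ∧
      2 * lam ^ j * u (j - 1) t * (u j t) ^ 2 ≤ 0) ∧
    AntitoneOn (fun s => ∑' l : ℕ, (u (j + l) s) ^ 2) (Set.Icc t₀ T) := by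
  have hfun : (fun s => ∑' l : ℕ, (u (j + l) s) ^ 2)
      = fun s => ∑ l ∈ Finset.range (N + 1), (u (j + l) s) ^ 2 := by
    funext s
    apply tsum_eq_sum
    intro l hl
    have hNl : N < j + l := by
      simp only [Finset.mem_range, not_lt] at hl; omega
    simp [hfin _ hNl s]
  rw [hfun]
  -- the derivative at each point
  have hder : ∀ t ∈ Set.Icc t₀ T,
      HasDerivWithinAt (fun s => ∑ l ∈ Finset.range (N + 1), (u (j + l) s) ^ 2)
        (2 * lam ^ j * u (j - 1) t * (u j t) ^ 2) (Set.Icc t₀ T) t := by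
    intro t ht'
    set g : ℕ → ℝ := fun l => 2 * lam ^ (j + l) * u (j + l - 1) t * (u (j + l) t) ^ 2 with hg
    have key : HasDerivWithinAt (fun s => ∑ l ∈ Finset.range (N + 1), (u (j + l) s) ^ 2)
        (∑ l ∈ Finset.range (N + 1), (g l - g (l + 1))) (Set.Icc t₀ T) t := by
      apply HasDerivWithinAt.fun_sum
      intro l _
      have h1 : 1 ≤ j + l := le_trans hjson (Nat.le_add_right j l)
      have hd := (hode (j + l) h1 t ht').fun_pow 2
      convert hd using 1
      · rfl
      have e3 : j + (l + 1) = j + l + 1 := by omega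
      simp only [hg, e3, Nat.add_sub_cancel]
      push_cast
      ring
    have hsum : (∑ l ∈ Finset.range (N + 1), (g l - g (l + 1)))
        = 2 * lam ^ j * u (j - 1) t * (u j t) ^ 2 := by
      rw [Finset.sum_range_sub' g]
      have hz : u (j + (N + 1)) t = 0 := hfin _ (by omega) t
      simp [hg, hz]
    rwa [hsum] at key
  have hnp : ∀ t ∈ Set.Icc t₀ T, 2 * lam ^ j * u (j - 1) t * (u j t) ^ 2 ≤ 0 := by
    intro t ht'
    have h1 : (0:ℝ) ≤ 2 * lam ^ j := by positivity
    have h2 := hneg t ht'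
    have h3 : 2 * lam ^ j * u (j - 1) t ≤ 0 := mul_nonpos_of_nonneg_of_nonpos h1 h2
    exact mul_nonpos_of_nonpos_of_nonneg h3 (sq_nonneg _)
  refine ⟨fun t ht' => ⟨hder t ht', hnp t ht'⟩, ?_⟩
  apply antitoneOn_of_deriv_nonpos (convex_Icc t₀ T)
  · exact fun x hx => (hder x hx).continuousWithinAt
  · intro x hx
    rw [interior_Icc] at hx
    exact ((hder x (Set.mem_Icc_of_Ioo hx)).hasDerivAt
      (Icc_mem_nhds hx.1 hx.2)).differentiableAt.differentiableWithinAt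
  · intro x hx
    rw [interior_Icc] at hx
    have hda := (hder x (Set.mem_Icc_of_Ioo hx)).hasDerivAt (Icc_mem_nhds hx.1 hx.2)
    rw [hda.deriv]
    exact hnp x (Set.mem_Icc_of_Ioo hx)
end

section
/- Lower bound for mode growth in the KP model (step in Lemma 2.2/3.1): let u_{j-1}, u_j, u_{j+1} be continuous on [0, t_j] with u_j differentiable, u_j > 0, satisfying u_j'/u_j = λ^j u_{j-1} - λ^{j+1} u_{j+1}^2/u_j, and suppose 0 < u_j(0) ≤ λ^{-sj} and u_j(t_j) = λ^{-j} for some s > 1. Then sup_{t ≤ t_j} u_{j-1}(t) ≥ (s-1)·j·log(λ)/(λ^j · t_j). -/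
/-- Lower bound for the previous mode forced by growth of `u_j` from
`λ^{-sj}` to `λ^{-j}` (inequality (5.11)). -/
theorem stmt_11 (lam : ℝ) (hlam : 1 < lam) (s : ℝ) (hs : 1 < s)
    (j : ℕ) (hjson : 1 ≤ j) (tj : ℝ) (htj : 0 < tj) (v u w : ℝ → ℝ)
    (hv : ContinuousOn v (Set.Icc 0 tj)) (hu : ContinuousOn u (Set.Icc 0 tj))
    (hw : ContinuousOn w (Set.Icc 0 tj))
    (hupos : ∀ t ∈ Set.Icc 0 tj, 0 < u t)
    (hode : ∀ t ∈ Set.Icc 0 tj,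
      HasDerivWithinAt u (lam ^ j * v t * u t - lam ^ (j + 1) * (w t) ^ 2)
        (Set.Icc 0 tj) t)
    (h0 : u 0 ≤ lam ^ (-(s * j) : ℝ))
    (hend : u tj = lam ^ (-(j : ℝ)) ) :
    (s - 1) * j * Real.log lam / (lam ^ j * tj) ≤ sSup (v '' Set.Icc 0 tj) := by
  have hlam0 : (0 : ℝ) < lam := lt_trans one_pos hlam
  set M := sSup (v '' Set.Icc 0 tj) with hMdef
  have hbdd : BddAbove (v '' Set.Icc 0 tj) :=
    (isCompact_Icc.image_of_continuousOn hv).bddAbove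
  have hM : ∀ t ∈ Set.Icc 0 tj, v t ≤ M := fun t ht =>
    le_csSup hbdd ⟨t, ht, rfl⟩
  set c := lam ^ j * M with hcdef
  set g := fun t => u t * Real.exp (-c * t) with hgdef
  -- derivative of g at interior points
  have hg : ∀ x ∈ Set.Ioo (0:ℝ) tj,
      HasDerivAt g ((lam ^ j * v x * u x - lam ^ (j + 1) * (w x) ^ 2
        - c * u x) * Real.exp (-c * x)) x := by
    intro x hx
    have hxmem : x ∈ Set.Icc (0:ℝ) tj := Set.Ioo_subset_Icc_self hx
    have hnhds : Set.Icc (0:ℝ) tj ∈ nhds x := Icc_mem_nhds hx.1 hx.2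
    have hu' : HasDerivAt u
        (lam ^ j * v x * u x - lam ^ (j + 1) * (w x) ^ 2) x :=
      (hode x hxmem).hasDerivAt hnhds
    have he : HasDerivAt (fun t => Real.exp (-c * t))
        (Real.exp (-c * x) * (-c)) x := by
      simpa [mul_comm] using ((hasDerivAt_id x).const_mul (-c)).exp
    have := hu'.mul he
    exact this.congr_deriv (by ring)
  have hgcont : ContinuousOn g (Set.Icc 0 tj) :=
    hu.mul (Real.continuous_exp.comp (continuous_const.mul continuous_id)).continuousOn
  have hderiv_nonpos : ∀ x ∈ Set.Ioo (0:ℝ) tj, deriv g x ≤ 0 := by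
    intro x hx
    rw [(hg x hx).deriv]
    have hxmem : x ∈ Set.Icc (0:ℝ) tj := Set.Ioo_subset_Icc_self hx
    have h1 : lam ^ j * v x * u x ≤ c * u x := by
      rw [hcdef]
      have := mul_le_mul_of_nonneg_left (hM x hxmem)
        (le_of_lt (pow_pos hlam0 j))
      have := mul_le_mul_of_nonneg_right this (le_of_lt (hupos x hxmem))
      linarith [this]
    have h2 : 0 ≤ lam ^ (j + 1) * (w x) ^ 2 :=
      mul_nonneg (le_of_lt (pow_pos hlam0 _)) (sq_nonneg _)
    have h3 : lam ^ j * v x * u x - lam ^ (j + 1) * (w x) ^ 2 - c * u x ≤ 0 := by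
      linarith
    exact mul_nonpos_of_nonpos_of_nonneg h3 (le_of_lt (Real.exp_pos _))
  have hanti : AntitoneOn g (Set.Icc 0 tj) := by
    apply antitoneOn_of_deriv_nonpos (convex_Icc 0 tj) hgcont
    · rw [interior_Icc]
      exact fun x hx => (hg x hx).differentiableAt.differentiableWithinAt
    · rw [interior_Icc]; exact hderiv_nonpos
  have hge : g tj ≤ g 0 :=
    hanti (Set.left_mem_Icc.2 (le_of_lt htj))
      (Set.right_mem_Icc.2 (le_of_lt htj)) (le_of_lt htj)
  -- unfold
  have key : lam ^ (-(j:ℝ)) * Real.exp (-c * tj) ≤ lam ^ (-(s * j) : ℝ) := by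
    have : g 0 = u 0 := by simp [hgdef]
    rw [hgdef] at hge
    simp only at hge
    rw [hend] at hge
    calc lam ^ (-(j:ℝ)) * Real.exp (-c * tj) ≤ u 0 * Real.exp (-c * 0) := hge
      _ ≤ lam ^ (-(s * j) : ℝ) := by simpa using h0
  -- take logs
  have hlog : (s - 1) * j * Real.log lam ≤ c * tj := by
    have hlhs : (0:ℝ) < lam ^ (-(j:ℝ)) * Real.exp (-c * tj) :=
      mul_pos (Real.rpow_pos_of_pos hlam0 _) (Real.exp_pos _)
    have := Real.log_le_log (by positivity) key
    rw [Real.log_mul (ne_of_gt (Real.rpow_pos_of_pos hlam0 _))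
        (ne_of_gt (Real.exp_pos _)), Real.log_rpow hlam0, Real.log_rpow hlam0,
        Real.log_exp] at this
    nlinarith [this]
  -- conclude
  rw [div_le_iff₀ (by positivity)]
  calc (s - 1) * j * Real.log lam ≤ c * tj := hlog
    _ = M * (lam ^ j * tj) := by rw [hcdef]; ring
end

section
/- Bilinear estimate for the branched Obukhov nonlinearity: let the tree of dyadic cubes have branching number d, and for sequences U = (u_Q), V = (v_Q) define γ(U,V)_Q = λ^{j(Q)} u_{\tilde Q} v_Q - λ^{j(Q)+1} Σ_{Q' ∈ C¹(Q)} u_{Q'} v_{Q'}. Then for s ≥ 1, ‖γ(U,V)‖_{H^s}² ≤ 2(d+1)λ^{2s} ‖U‖_{H^s}² ‖V‖_{H^s}², where ‖U‖_{H^s}² = Σ_Q λ^{2s·j(Q)} u_Q². -/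
/-- Cubes of the `d`-ary branching tree are words over `Fin d`; the generation
`j(Q)` is the word length, the parent is the tail, children are given by
prepending a letter. The value of a sequence at the parent cube, with value `0`
at the (nonexistent) parent of the root. -/
def parentVal {d : ℕ} (U : List (Fin d) → ℝ) : List (Fin d) → ℝ
  | [] => 0
  | _ :: Q => U Q

/-- The squared `H^s` norm on the tree, `‖U‖² = Σ_Q λ^{2s·j(Q)} u_Q²`. -/
noncomputable def hsNormSq (lam s : ℝ) {d : ℕ} (U : List (Fin d) → ℝ) : ℝ :=
  ∑' Q : List (Fin d), lam ^ (2 * s * (Q.length : ℝ)) * (U Q) ^ 2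

/-- The bilinear branched Obukhov nonlinearity
`γ(U,V)_Q = λ^{j(Q)} u_{parent Q} v_Q - λ^{j(Q)+1} Σ_{Q' child of Q} u_{Q'} v_{Q'}`. -/
noncomputable def gammaOb (lam : ℝ) {d : ℕ} (U V : List (Fin d) → ℝ)
    (Q : List (Fin d)) : ℝ :=
  lam ^ ((Q.length : ℝ)) * parentVal U Q * V Q
    - lam ^ ((Q.length : ℝ) + 1) * ∑ k : Fin d, U (k :: Q) * V (k :: Q)

/-- Cauchy–Schwarz type inequality for `a` minus a `d`-fold sum. -/
lemma aux_cs {d : ℕ} (a : ℝ) (f : Fin d → ℝ) :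
    (a - ∑ k : Fin d, f k) ^ 2 ≤ (d + 1) * (a ^ 2 + ∑ k : Fin d, (f k) ^ 2) := by
  have h1 : (∑ k : Fin d, f k) ^ 2 ≤ (d : ℝ) * ∑ k : Fin d, (f k) ^ 2 := by
    simpa using sq_sum_le_card_mul_sum_sq (s := (Finset.univ : Finset (Fin d))) (f := f)
  have h2 : -(2 * a * ∑ k : Fin d, f k) ≤ (d : ℝ) * a ^ 2 + ∑ k : Fin d, (f k) ^ 2 := by
    have : ∀ k : Fin d, -(2 * a * f k) ≤ a ^ 2 + (f k) ^ 2 := by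
      intro k; nlinarith [sq_nonneg (a + f k)]
    calc -(2 * a * ∑ k : Fin d, f k) = ∑ k : Fin d, -(2 * a * f k) := by
          rw [Finset.mul_sum, ← Finset.sum_neg_distrib]
      _ ≤ ∑ k : Fin d, (a ^ 2 + (f k) ^ 2) := Finset.sum_le_sum fun k _ => this k
      _ = (d : ℝ) * a ^ 2 + ∑ k : Fin d, (f k) ^ 2 := by
          rw [Finset.sum_add_distrib]; simp [mul_comm]
  nlinarith [h1, h2]

/-- Key rpow manipulation step. -/
lemma rpow_step {lam : ℝ} (hlam : 1 < lam) {u v M : ℝ} {α β γ δ p : ℝ}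
    (hu : lam ^ p * u ^ 2 ≤ M) (hexp : α + (β + β) ≤ γ + δ + p) :
    lam ^ α * (lam ^ β * u * v) ^ 2 ≤ lam ^ γ * M * (lam ^ δ * v ^ 2) := by
  have hl0 : (0 : ℝ) < lam := lt_trans one_pos hlam
  have hM : 0 ≤ M := le_trans (by positivity) hu
  have hu2 : u ^ 2 ≤ lam ^ (-p) * M := by
    have h := mul_le_mul_of_nonneg_left hu (le_of_lt (Real.rpow_pos_of_pos hl0 (-p)))
    calc u ^ 2 = lam ^ (-p) * (lam ^ p * u ^ 2) := by
          rw [← mul_assoc, ← Real.rpow_add hl0]; simp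
      _ ≤ _ := h
  have hsq : (lam ^ β) ^ 2 = lam ^ (β + β) := by rw [sq, ← Real.rpow_add hl0]
  calc lam ^ α * (lam ^ β * u * v) ^ 2
      = lam ^ α * (lam ^ β) ^ 2 * (u ^ 2 * v ^ 2) := by ring
    _ = lam ^ (α + (β + β)) * (u ^ 2 * v ^ 2) := by rw [hsq, ← Real.rpow_add hl0]
    _ ≤ lam ^ (α + (β + β)) * (lam ^ (-p) * M * v ^ 2) := by
        apply mul_le_mul_of_nonneg_left _ (le_of_lt (Real.rpow_pos_of_pos hl0 _))
        exact mul_le_mul_of_nonneg_right hu2 (sq_nonneg v)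
    _ = lam ^ (α + (β + β)) * lam ^ (-p) * (M * v ^ 2) := by ring
    _ = lam ^ (α + (β + β) + -p) * (M * v ^ 2) := by rw [← Real.rpow_add hl0]
    _ ≤ lam ^ (γ + δ) * (M * v ^ 2) := by
        apply mul_le_mul_of_nonneg_right _ (by positivity)
        exact Real.rpow_le_rpow_left_iff hlam |>.2 (by linarith)
    _ = lam ^ γ * lam ^ δ * (M * v ^ 2) := by rw [← Real.rpow_add hl0]
    _ = lam ^ γ * M * (lam ^ δ * v ^ 2) := by ring

/-- Bilinear estimate for the branched Obukhov nonlinearity: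
`‖γ(U,V)‖²_{H^s} ≤ 2(d+1) λ^{2s} ‖U‖²_{H^s} ‖V‖²_{H^s}` for `s ≥ 1`. -/
theorem stmt_13 (lam : ℝ) (hlam : 1 < lam) (s : ℝ) (hs : 1 ≤ s)
    (d : ℕ) (hd : 1 ≤ d) (U V : List (Fin d) → ℝ)
    (hU : Summable fun Q : List (Fin d) => lam ^ (2 * s * (Q.length : ℝ)) * (U Q) ^ 2)
    (hV : Summable fun Q : List (Fin d) => lam ^ (2 * s * (Q.length : ℝ)) * (V Q) ^ 2) :
    (Summable fun Q : List (Fin d) =>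
      lam ^ (2 * s * (Q.length : ℝ)) * (gammaOb lam U V Q) ^ 2) ∧
    hsNormSq lam s (gammaOb lam U V) ≤
      2 * (d + 1) * lam ^ (2 * s) * hsNormSq lam s U * hsNormSq lam s V := by
  have hl0 : (0 : ℝ) < lam := lt_trans one_pos hlam
  set MU := hsNormSq lam s U with hMUdef
  set MV := hsNormSq lam s V with hMVdef
  have hnnU : ∀ Q : List (Fin d), 0 ≤ lam ^ (2 * s * (Q.length : ℝ)) * (U Q) ^ 2 := fun Q => by positivity
  have hnnV : ∀ Q : List (Fin d), 0 ≤ lam ^ (2 * s * (Q.length : ℝ)) * (V Q) ^ 2 := fun Q => by positivity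
  have hMU0 : 0 ≤ MU := tsum_nonneg hnnU
  have hMV0 : 0 ≤ MV := tsum_nonneg hnnV
  have hleU : ∀ Q : List (Fin d), lam ^ (2 * s * (Q.length : ℝ)) * (U Q) ^ 2 ≤ MU := fun Q =>
    hU.le_tsum Q (fun i _ => hnnU i)
  -- the dominating function
  set W : List (Fin d) → ℝ := fun Q => ∑ k : Fin d,
    lam ^ (2 * s * ((Q.length : ℝ) + 1)) * (V (k :: Q)) ^ 2 with hWdef
  set g : List (Fin d) → ℝ := fun Q => ((d : ℝ) + 1) *
    (lam ^ (2 * s) * MU * (lam ^ (2 * s * (Q.length : ℝ)) * (V Q) ^ 2)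
      + lam ^ (2 * s) * MU * W Q) with hgdef
  -- summability of W
  have hWk : ∀ k : Fin d, Summable (fun Q : List (Fin d) =>
      lam ^ (2 * s * ((Q.length : ℝ) + 1)) * (V (k :: Q)) ^ 2) := by
    intro k
    have := hV.comp_injective (i := fun Q : List (Fin d) => k :: Q) (List.cons_injective)
    convert this using 2 with Q
    case e'_3 => rfl
    simp only [Function.comp_apply, List.length_cons]
    push_cast
    ring_nf
  have hWsum : Summable W := by
    apply summable_sum (fun k _ => hWk k)
  have hgsum : Summable g := by
    apply Summable.mul_left
    exact (hV.mul_left _).add (hWsum.mul_left _)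
  -- pointwise bound
  have hpt : ∀ Q : List (Fin d), lam ^ (2 * s * (Q.length : ℝ)) * (gammaOb lam U V Q) ^ 2 ≤ g Q := by
    intro Q
    set j : ℝ := (Q.length : ℝ) with hj
    have hj0 : 0 ≤ j := Nat.cast_nonneg _
    have hcs : (gammaOb lam U V Q) ^ 2 ≤ ((d : ℝ) + 1) *
        ((lam ^ j * parentVal U Q * V Q) ^ 2
          + ∑ k : Fin d, (lam ^ (j + 1) * U (k :: Q) * V (k :: Q)) ^ 2) := by
      have : gammaOb lam U V Q = lam ^ j * parentVal U Q * V Q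
          - ∑ k : Fin d, lam ^ (j + 1) * U (k :: Q) * V (k :: Q) := by
        rw [gammaOb, Finset.mul_sum]; congr 1; apply Finset.sum_congr rfl; intro k _; ring
      rw [this]
      exact aux_cs _ _
    have hA : lam ^ (2 * s * j) * (lam ^ j * parentVal U Q * V Q) ^ 2 ≤
        lam ^ (2 * s) * MU * (lam ^ (2 * s * j) * (V Q) ^ 2) := by
      cases Q with
      | nil =>
        simp only [parentVal]
        have : (lam ^ j * 0 * V []) ^ 2 = 0 := by ring
        rw [this, mul_zero]
        positivity
      | cons k Q' =>
        have hlen : j = (Q'.length : ℝ) + 1 := by simp [hj]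
        simp only [parentVal]
        apply rpow_step hlam (hleU Q')
        rw [hlen]
        nlinarith [Nat.cast_nonneg (α := ℝ) Q'.length, mul_nonneg (sub_nonneg.2 hs)
          (Nat.cast_nonneg (α := ℝ) Q'.length)]
    have hB : ∀ k : Fin d, lam ^ (2 * s * j) * (lam ^ (j + 1) * U (k :: Q) * V (k :: Q)) ^ 2 ≤
        lam ^ (2 * s) * MU * (lam ^ (2 * s * (j + 1)) * (V (k :: Q)) ^ 2) := by
      intro k
      have hu := hleU (k :: Q)
      have hlen : ((k :: Q).length : ℝ) = j + 1 := by simp [hj]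
      rw [hlen] at hu
      apply rpow_step hlam hu
      nlinarith [hj0, mul_nonneg (sub_nonneg.2 hs) hj0]
    calc lam ^ (2 * s * j) * (gammaOb lam U V Q) ^ 2
        ≤ lam ^ (2 * s * j) * (((d : ℝ) + 1) *
          ((lam ^ j * parentVal U Q * V Q) ^ 2
            + ∑ k : Fin d, (lam ^ (j + 1) * U (k :: Q) * V (k :: Q)) ^ 2)) :=
          mul_le_mul_of_nonneg_left hcs (le_of_lt (Real.rpow_pos_of_pos hl0 _))
      _ = ((d : ℝ) + 1) * (lam ^ (2 * s * j) * (lam ^ j * parentVal U Q * V Q) ^ 2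
            + ∑ k : Fin d, lam ^ (2 * s * j) * (lam ^ (j + 1) * U (k :: Q) * V (k :: Q)) ^ 2) := by
          rw [← Finset.mul_sum]; ring
      _ ≤ ((d : ℝ) + 1) * (lam ^ (2 * s) * MU * (lam ^ (2 * s * j) * (V Q) ^ 2)
            + ∑ k : Fin d, lam ^ (2 * s) * MU * (lam ^ (2 * s * (j + 1)) * (V (k :: Q)) ^ 2)) := by
          apply mul_le_mul_of_nonneg_left _ (by positivity)
          exact add_le_add hA (Finset.sum_le_sum fun k _ => hB k)
      _ = g Q := by
          simp only [hgdef, hWdef, Finset.mul_sum]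
          rfl
    -- done
  have hγnn : ∀ Q : List (Fin d), 0 ≤ lam ^ (2 * s * (Q.length : ℝ)) * (gammaOb lam U V Q) ^ 2 :=
    fun Q => by positivity
  have hγsum : Summable (fun Q : List (Fin d) =>
      lam ^ (2 * s * (Q.length : ℝ)) * (gammaOb lam U V Q) ^ 2) :=
    Summable.of_nonneg_of_le hγnn hpt hgsum
  refine ⟨hγsum, ?_⟩
  -- bound on tsum of W
  have hprodsum : Summable (fun p : Fin d × List (Fin d) =>
      lam ^ (2 * s * (((p.1 :: p.2 : List (Fin d))).length : ℝ)) * (V (p.1 :: p.2)) ^ 2) := by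
    apply hV.comp_injective (i := fun p : Fin d × List (Fin d) => p.1 :: p.2)
    intro a b h
    simp only [List.cons.injEq] at h
    exact Prod.ext h.1 h.2
  have hWle : ∑' Q : List (Fin d), W Q ≤ MV := by
    have h1 : ∑' Q : List (Fin d), W Q = ∑ k : Fin d, ∑' Q : List (Fin d),
        lam ^ (2 * s * ((Q.length : ℝ) + 1)) * (V (k :: Q)) ^ 2 :=
      Summable.tsum_finsetSum (fun k _ => hWk k)
    have h2 : ∀ k : Fin d, (∑' Q : List (Fin d), lam ^ (2 * s * ((Q.length : ℝ) + 1)) * (V (k :: Q)) ^ 2)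
        = ∑' Q : List (Fin d), lam ^ (2 * s * (((k :: Q : List (Fin d))).length : ℝ)) * (V (k :: Q)) ^ 2 := by
      intro k
      apply tsum_congr
      intro Q
      simp only [List.length_cons]
      push_cast
      ring_nf
    have h3 : (∑' p : Fin d × List (Fin d),
          lam ^ (2 * s * (((p.1 :: p.2 : List (Fin d))).length : ℝ)) * (V (p.1 :: p.2)) ^ 2)
        = ∑ k : Fin d, ∑' Q : List (Fin d),
          lam ^ (2 * s * (((k :: Q : List (Fin d))).length : ℝ)) * (V (k :: Q)) ^ 2 := by
      rw [Summable.tsum_prod hprodsum, tsum_fintype]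
    have h4 : (∑' p : Fin d × List (Fin d),
          lam ^ (2 * s * (((p.1 :: p.2 : List (Fin d))).length : ℝ)) * (V (p.1 :: p.2)) ^ 2) ≤ MV := by
      apply Summable.tsum_le_tsum_of_inj (fun p : Fin d × List (Fin d) => p.1 :: p.2)
      · intro a b h
        simp only [List.cons.injEq] at h
        exact Prod.ext h.1 h.2
      · intro c _; exact hnnV c
      · intro p; exact le_refl _
      · exact hprodsum
      · exact hV
    calc ∑' Q : List (Fin d), W Q = ∑ k : Fin d, ∑' Q : List (Fin d),
          lam ^ (2 * s * (((k :: Q : List (Fin d))).length : ℝ)) * (V (k :: Q)) ^ 2 := by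
          rw [h1]; exact Finset.sum_congr rfl fun k _ => h2 k
      _ ≤ MV := h3 ▸ h4
  -- final computation
  have hle : hsNormSq lam s (gammaOb lam U V) ≤ ∑' Q : List (Fin d), g Q :=
    Summable.tsum_le_tsum hpt hγsum hgsum
  have hgval : ∑' Q : List (Fin d), g Q = ((d : ℝ) + 1) *
      (lam ^ (2 * s) * MU * MV + lam ^ (2 * s) * MU * ∑' Q : List (Fin d), W Q) := by
    rw [tsum_mul_left, Summable.tsum_add (hV.mul_left _) (hWsum.mul_left _),
      tsum_mul_left, tsum_mul_left]
    rfl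
  have hc0 : 0 ≤ lam ^ (2 * s) := le_of_lt (Real.rpow_pos_of_pos hl0 _)
  have : ∑' Q : List (Fin d), g Q ≤ 2 * (d + 1) * lam ^ (2 * s) * MU * MV := by
    rw [hgval]
    have h5 : lam ^ (2 * s) * MU * ∑' Q : List (Fin d), W Q ≤ lam ^ (2 * s) * MU * MV :=
      mul_le_mul_of_nonneg_left hWle (by positivity)
    nlinarith [mul_nonneg (mul_nonneg hc0 hMU0) hMV0]
  linarith [hle, this]
end
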